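/- arXiv:math/0604454 — 3 statements merged into one kernel-verified Lean document; each statement's English description precedes it below -/
import Mathlib

section
/- Let S be a set of scaled generators for a max cone K in ℝ≥0^n and let E be the set of scaled extremals in K. Then: (1) E ⊆ S; and (2) for any u ∈ S \ E, the set S \ {u} is a set of generators for K. -/
open scoped NNReal

/-- The max-algebraic span of `S`: all vectors `⨆_{x ∈ S} λ_x • x` where only
finitely many coefficients `λ_x` are nonzero (`MaxSpan ∅ = {0}`). -/
def MaxSpan {n : ℕ} (S : Set (Fin n → ℝ≥0)) : Set (Fin n → ℝ≥0) :=
  {u | ∃ (F : Finset (Fin n → ℝ≥0)) (lam : (Fin n → ℝ≥0) → ℝ≥0),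
    ↑F ⊆ S ∧ u = F.sup (fun x => lam x • x)}

/-- A max cone: a subset of `ℝ≥0ⁿ` closed under pointwise max `⊔` and under
multiplication by nonnegative scalars. -/
def MaxCone {n : ℕ} (K : Set (Fin n → ℝ≥0)) : Prop :=
  0 ∈ K ∧ (∀ x ∈ K, ∀ y ∈ K, x ⊔ y ∈ K) ∧ (∀ (c : ℝ≥0), ∀ x ∈ K, c • x ∈ K)

/-- `u` is an extremal in `K` if `u = v ⊔ w` with `v, w ∈ K` implies `u = v` or `u = w`. -/
def IsExtremal {n : ℕ} (K : Set (Fin n → ℝ≥0)) (u : Fin n → ℝ≥0) : Prop :=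
  u ∈ K ∧ ∀ v ∈ K, ∀ w ∈ K, u = v ⊔ w → u = v ∨ u = w

/-- A vector is scaled if its max norm `⨆ i, x i` equals `1`. -/
def Scaled {n : ℕ} (x : Fin n → ℝ≥0) : Prop := (⨆ i, x i) = 1

/-- The support of a vector. -/
def supp {n : ℕ} (v : Fin n → ℝ≥0) : Set (Fin n) := {j | 0 < v j}

/-- For `j ∈ supp u`, `rescale u j = (1 / u j) • u`, the `j`-scaling `u(j)`. -/
noncomputable def rescale {n : ℕ} (u : Fin n → ℝ≥0) (j : Fin n) : Fin n → ℝ≥0 :=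
  (u j)⁻¹ • u

/-- `T(j) = {u(j) : u ∈ T, j ∈ supp u}`. -/
noncomputable def setScale {n : ℕ} (T : Set (Fin n → ℝ≥0)) (j : Fin n) :
    Set (Fin n → ℝ≥0) :=
  {y | ∃ u ∈ T, j ∈ supp u ∧ y = rescale u j}

/-- `u` is minimal in `T` if `v ∈ T` and `v ≤ u` imply `v = u`. -/
def MinimalIn {n : ℕ} (T : Set (Fin n → ℝ≥0)) (u : Fin n → ℝ≥0) : Prop :=
  u ∈ T ∧ ∀ v ∈ T, v ≤ u → v = u

/-- A set is totally dependent if each of its elements is a max combination of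
the remaining ones. -/
def TotallyDependent {n : ℕ} (S : Set (Fin n → ℝ≥0)) : Prop :=
  ∀ x ∈ S, x ∈ MaxSpan (S \ {x})

/-- A set is independent if none of its elements is a max combination of
the remaining ones. -/
def IndependentSet {n : ℕ} (S : Set (Fin n → ℝ≥0)) : Prop :=
  ∀ x ∈ S, x ∉ MaxSpan (S \ {x})

/-- A basis for `K` is an independent set of generators for `K`. -/
def IsBasis {n : ℕ} (S K : Set (Fin n → ℝ≥0)) : Prop :=
  IndependentSet S ∧ MaxSpan S = K

/-!
An extremal `x` of `K = span S` that is written as a finite max combination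
`⨆ λ_y • y` must equal one of the terms `λ_y • y`; if `x` and `y` are both scaled,
then `λ_y = 1` and `x = y ∈ S`.

If `u ∈ S` is not extremal, then `u = v ⊔ w` with `v, w < u` in `K`. Splitting off the
`u`-term of a max combination gives `v = v' ⊔ a • u` and `w = w' ⊔ b • u` with
`v', w' ∈ span (S \ {u})`, and `v < u` forces `a < 1` (likewise `b < 1`). Hence
`u = (v' ⊔ w') ⊔ (a ⊔ b) • u`, and a term `c • u` with `c < 1` can be absorbed, so
`u = v' ⊔ w' ∈ span (S \ {u})`.
-/

section Pointwise
variable {ι : Type*}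

lemma smul_sup_pi (c : ℝ≥0) (x y : ι → ℝ≥0) : c • (x ⊔ y) = c • x ⊔ c • y :=
  funext fun j => mul_max c (x j) (y j)

lemma sup_smul_pi (a b : ℝ≥0) (x : ι → ℝ≥0) : (a ⊔ b) • x = a • x ⊔ b • x :=
  funext fun j => max_mul a b (x j)

lemma smul_finset_sup_pi {α : Type*} (c : ℝ≥0) (F : Finset α) (f : α → ι → ℝ≥0) :
    c • F.sup f = F.sup (fun a => c • f a) := by
  classical
  induction F using Finset.induction_on with
  | empty => ext; simp
  | insert a F _ ih => rw [Finset.sup_insert, Finset.sup_insert, smul_sup_pi, ih]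

lemma eq_of_eq_sup_smul_of_lt_one {x u : ι → ℝ≥0} {c : ℝ≥0} (hc : c < 1)
    (h : u = x ⊔ c • u) : u = x := by
  funext j
  have hj : u j = max (x j) (c * u j) := congrFun h j
  refine le_antisymm ?_ (hj ▸ le_max_left _ _)
  by_contra! hlt
  have hcu : c * u j < u j := mul_lt_of_lt_one_left (pos_of_gt hlt) hc
  exact (max_lt hlt hcu).ne hj.symm

lemma lt_one_of_sup_smul_lt {x u : ι → ℝ≥0} {a : ℝ≥0} (h : x ⊔ a • u < u) : a < 1 := by
  by_contra! ha
  exact h.not_ge (le_sup_of_le_right fun j => le_mul_of_one_le_left zero_le ha)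

end Pointwise

section MaxSpan
variable {n : ℕ} {S T K : Set (Fin n → ℝ≥0)}

lemma Scaled.ne_zero {x : Fin n → ℝ≥0} (hx : Scaled x) : x ≠ 0 := by
  rintro rfl
  have h0 : (⨆ i, (0 : Fin n → ℝ≥0) i) ≤ 0 := ciSup_le' fun _ => le_rfl
  rw [hx] at h0
  exact one_ne_zero (le_antisymm h0 zero_le)

lemma Scaled.eq_of_eq_smul {x y : Fin n → ℝ≥0} {c : ℝ≥0} (hx : Scaled x) (hy : Scaled y)
    (h : x = c • y) : x = y := by
  have hc : c = 1 := by
    have hsup : (⨆ i, x i) = c * ⨆ i, y i := by rw [h, NNReal.mul_iSup]; rfl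
    rwa [hx, hy, mul_one, eq_comm] at hsup
  rw [h, hc, one_smul]

lemma subset_maxSpan : S ⊆ MaxSpan S := fun x hx =>
  ⟨{x}, fun _ => 1, by simpa using hx, by simp⟩

lemma maxSpan_mono (h : S ⊆ T) : MaxSpan S ⊆ MaxSpan T := by
  rintro u ⟨F, lam, hF, rfl⟩
  exact ⟨F, lam, hF.trans h, rfl⟩

lemma MaxCone.finset_sup_mem (hK : MaxCone K) {α : Type*} (F : Finset α)
    {f : α → Fin n → ℝ≥0} (hf : ∀ a ∈ F, f a ∈ K) : F.sup f ∈ K :=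
  Finset.sup_induction hK.1 hK.2.1 hf

lemma MaxCone.maxSpan_subset (hK : MaxCone K) (h : S ⊆ K) : MaxSpan S ⊆ K := by
  rintro u ⟨F, lam, hF, rfl⟩
  exact hK.finset_sup_mem F fun x hx => hK.2.2 (lam x) x (h (hF hx))

lemma finset_sup_smul_eq_sup_indicator {F H : Finset (Fin n → ℝ≥0)} (hFH : F ⊆ H)
    (lam : (Fin n → ℝ≥0) → ℝ≥0) :
    F.sup (fun x => lam x • x) = H.sup (fun x => (F : Set _).indicator lam x • x) := by
  apply le_antisymm
  · refine Finset.sup_le fun x hx => ?_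
    rw [← Set.indicator_of_mem (Finset.mem_coe.mpr hx) lam]
    exact Finset.le_sup (f := fun x => (F : Set _).indicator lam x • x) (hFH hx)
  · refine Finset.sup_le fun x _ => ?_
    by_cases hx : x ∈ F
    · rw [Set.indicator_of_mem (Finset.mem_coe.mpr hx)]
      exact Finset.le_sup (f := fun x => lam x • x) hx
    · simp [Set.indicator_of_notMem (Finset.mem_coe.not.mpr hx)]

lemma maxCone_maxSpan (S : Set (Fin n → ℝ≥0)) : MaxCone (MaxSpan S) := by
  classical
  refine ⟨⟨∅, fun _ => 0, by simp, by ext; simp⟩, ?_, ?_⟩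
  · rintro _ ⟨F, lam, hF, rfl⟩ _ ⟨G, mu, hG, rfl⟩
    refine ⟨F ∪ G, (F : Set _).indicator lam ⊔ (G : Set _).indicator mu,
      by simpa using Set.union_subset hF hG, ?_⟩
    rw [finset_sup_smul_eq_sup_indicator Finset.subset_union_left,
      finset_sup_smul_eq_sup_indicator (H := F ∪ G) Finset.subset_union_right,
      ← Finset.sup_sup]
    simp only [Pi.sup_apply, sup_smul_pi]
    rfl
  · rintro c _ ⟨F, lam, hF, rfl⟩
    exact ⟨F, fun x => c * lam x, hF, by simp only [smul_finset_sup_pi, mul_smul]⟩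

lemma maxSpan_subset_of_subset_maxSpan (h : S ⊆ MaxSpan T) : MaxSpan S ⊆ MaxSpan T :=
  (maxCone_maxSpan T).maxSpan_subset h

lemma maxSpan_diff_singleton_eq {u : Fin n → ℝ≥0} (hu : u ∈ MaxSpan (S \ {u})) :
    MaxSpan (S \ {u}) = MaxSpan S := by
  refine (maxSpan_mono Set.sdiff_subset).antisymm (maxSpan_subset_of_subset_maxSpan ?_)
  intro x hx
  by_cases hxu : x = u
  · exact hxu ▸ hu
  · exact subset_maxSpan ⟨hx, hxu⟩

lemma IsExtremal.exists_eq_of_eq_finset_sup (hK : MaxCone K) {x : Fin n → ℝ≥0}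
    (hx : IsExtremal K x) (hx0 : x ≠ 0) {α : Type*} [DecidableEq α] {F : Finset α}
    {f : α → Fin n → ℝ≥0} (hf : ∀ a ∈ F, f a ∈ K) (h : x = F.sup f) : ∃ a ∈ F, x = f a := by
  induction F using Finset.induction_on with
  | empty => exact absurd (h.trans (funext fun _ => bot_eq_zero)) hx0
  | insert a F _ ih =>
    rw [Finset.sup_insert] at h
    have hFK : F.sup f ∈ K := hK.finset_sup_mem F fun b hb => hf b (Finset.mem_insert_of_mem hb)
    rcases hx.2 _ (hf a (Finset.mem_insert_self a F)) _ hFK h with h | h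
    · exact ⟨a, Finset.mem_insert_self a F, h⟩
    · obtain ⟨b, hb, hxb⟩ := ih (fun b hb => hf b (Finset.mem_insert_of_mem hb)) h
      exact ⟨b, Finset.mem_insert_of_mem hb, hxb⟩

lemma IsExtremal.mem_of_scaled {x : Fin n → ℝ≥0} (hx : IsExtremal (MaxSpan S) x)
    (hxs : Scaled x) (hS : ∀ y ∈ S, Scaled y) : x ∈ S := by
  classical
  obtain ⟨F, lam, hF, hxF⟩ := hx.1
  have hterms : ∀ y ∈ F, lam y • y ∈ MaxSpan S := fun y hy =>
    (maxCone_maxSpan S).2.2 _ _ (subset_maxSpan (hF hy))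
  obtain ⟨y, hy, hxy⟩ :=
    hx.exists_eq_of_eq_finset_sup (maxCone_maxSpan S) hxs.ne_zero hterms hxF
  exact hxs.eq_of_eq_smul (hS y (hF hy)) hxy ▸ hF hy

lemma exists_eq_sup_smul_of_mem_maxSpan {v : Fin n → ℝ≥0} (hv : v ∈ MaxSpan S)
    (u : Fin n → ℝ≥0) : ∃ v' ∈ MaxSpan (S \ {u}), ∃ a : ℝ≥0, v = v' ⊔ a • u := by
  classical
  obtain ⟨F, lam, hF, rfl⟩ := hv
  have hrest : (F.erase u).sup (fun x => lam x • x) ∈ MaxSpan (S \ {u}) :=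
    ⟨F.erase u, lam, fun x hx => ⟨hF (Finset.mem_of_mem_erase hx),
      Finset.ne_of_mem_erase hx⟩, rfl⟩
  by_cases hu : u ∈ F
  · refine ⟨_, hrest, lam u, ?_⟩
    rw [← Finset.insert_erase hu, Finset.sup_insert, Finset.erase_insert
      (Finset.notMem_erase u F), sup_comm]
  · refine ⟨_, hrest, 0, ?_⟩
    rw [Finset.erase_eq_of_notMem hu, zero_smul, sup_eq_left.mpr zero_le]

lemma mem_maxSpan_diff_singleton_of_not_isExtremal {u : Fin n → ℝ≥0} (hu : u ∈ MaxSpan S)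
    (hne : ¬ IsExtremal (MaxSpan S) u) : u ∈ MaxSpan (S \ {u}) := by
  simp only [IsExtremal, hu, true_and, not_forall, not_or] at hne
  obtain ⟨v, hv, w, hw, huvw, huv, huw⟩ := hne
  obtain ⟨v', hv', a, rfl⟩ := exists_eq_sup_smul_of_mem_maxSpan hv u
  obtain ⟨w', hw', b, rfl⟩ := exists_eq_sup_smul_of_mem_maxSpan hw u
  have ha : a < 1 := lt_one_of_sup_smul_lt <| (huvw ▸ le_sup_left).lt_of_ne (Ne.symm huv)
  have hb : b < 1 := lt_one_of_sup_smul_lt <| (huvw ▸ le_sup_right).lt_of_ne (Ne.symm huw)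
  have hu' : u = (v' ⊔ w') ⊔ (a ⊔ b) • u := by
    rw [sup_smul_pi, ← sup_sup_sup_comm]
    exact huvw
  have hmem := (maxCone_maxSpan (S \ {u})).2.1 _ hv' _ hw'
  rwa [← eq_of_eq_sup_smul_of_lt_one (max_lt ha hb) hu'] at hmem

end MaxSpan

theorem stmt7_general {n : ℕ} (K S : Set (Fin n → ℝ≥0))
    (hgen : MaxSpan S = K) (hSsc : ∀ x ∈ S, Scaled x) :
    {x | IsExtremal K x ∧ Scaled x} ⊆ S ∧
    ∀ u ∈ S \ {x | IsExtremal K x ∧ Scaled x}, MaxSpan (S \ {u}) = K := by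
  subst hgen
  refine ⟨fun x ⟨hx, hxs⟩ => hx.mem_of_scaled hxs hSsc, ?_⟩
  rintro u ⟨huS, hu⟩
  have hnot : ¬ IsExtremal (MaxSpan S) u := fun h => hu ⟨h, hSsc u huS⟩
  exact maxSpan_diff_singleton_eq
    (mem_maxSpan_diff_singleton_of_not_isExtremal (subset_maxSpan huS) hnot)

/-- if `S` is a set of scaled generators for the max cone `K` and
`E` is the set of scaled extremals of `K`, then `E ⊆ S` and each
`u ∈ F = S \ E` is redundant: `S \ {u}` still generates `K`. -/
theorem stmt7 {n : ℕ} (K S : Set (Fin n → ℝ≥0)) (hK : MaxCone K)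
    (hgen : MaxSpan S = K) (hSsc : ∀ x ∈ S, Scaled x) :
    {x | IsExtremal K x ∧ Scaled x} ⊆ S ∧
    ∀ u ∈ S \ {x | IsExtremal K x ∧ Scaled x}, MaxSpan (S \ {u}) = K :=
  stmt7_general K S hgen hSsc
end

section
/- If S ⊆ ℝ≥0^n is compact and 0 ∉ S, then the max cone span(S) is closed in ℝ≥0^n. -/
open scoped NNReal

/-!
Each element of `span(S)` is a max combination of at most `n` elements of `S`: for every
coordinate `i` keep one term attaining the maximum at `i`. Since `0 ∉ S` and `S` is compact,
the max norm is bounded below on `S` by some `ε > 0`, so in a combination of norm at most `R`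
every coefficient is at most `R / ε`. Hence `span(S) ∩ {‖v‖ ≤ R}` lies inside the continuous
image of the compact set `[0, R / ε]ⁿ × Sⁿ` under `(c, y) ↦ ⨆ⱼ cⱼ • yⱼ`, which is contained
in `span(S)`; so `span(S)` is closed near every point.
-/

instance Pi.continuousSup {ι : Type*} {π : ι → Type*} [∀ i, TopologicalSpace (π i)]
    [∀ i, Max (π i)] [∀ i, ContinuousSup (π i)] : ContinuousSup (∀ i, π i) :=
  ⟨continuous_pi fun i => ((continuous_apply i).comp continuous_fst).sup
    ((continuous_apply i).comp continuous_snd)⟩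

theorem isClosed_of_forall_open_inter_subset_closed {X : Type*} [TopologicalSpace X]
    {s : Set X} (h : ∀ x, ∃ U, IsOpen U ∧ x ∈ U ∧ ∃ K, IsClosed K ∧ U ∩ s ⊆ K ∧ K ⊆ s) :
    IsClosed s := by
  refine isClosed_of_closure_subset fun x hx => ?_
  obtain ⟨U, hU, hxU, K, hK, hUsK, hKs⟩ := h x
  exact hKs (closure_minimal hUsK hK (hU.inter_closure ⟨hxU, hx⟩))

section MaxNorm

variable {ι : Type*} [Fintype ι]

def maxNorm (v : ι → ℝ≥0) : ℝ≥0 := Finset.univ.sup v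

theorem continuous_maxNorm : Continuous (maxNorm : (ι → ℝ≥0) → ℝ≥0) := by
  unfold maxNorm
  fun_prop

theorem maxNorm_mono : Monotone (maxNorm : (ι → ℝ≥0) → ℝ≥0) :=
  fun _ _ h => Finset.sup_mono_fun fun i _ => h i

theorem maxNorm_smul (c : ℝ≥0) (v : ι → ℝ≥0) : maxNorm (c • v) = c * maxNorm v :=
  (NNReal.mul_finset_sup c _ v).symm

theorem maxNorm_pos {v : ι → ℝ≥0} (hv : v ≠ 0) : 0 < maxNorm v := by
  obtain ⟨i, hi⟩ := Function.ne_iff.mp hv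
  exact (pos_iff_ne_zero.mpr hi).trans_le (Finset.le_sup (Finset.mem_univ i))

theorem IsCompact.exists_pos_le_maxNorm {S : Set (ι → ℝ≥0)} (hc : IsCompact S) (h0 : 0 ∉ S) :
    ∃ ε > 0, ∀ x ∈ S, ε ≤ maxNorm x := by
  rcases S.eq_empty_or_nonempty with rfl | hS
  · exact ⟨1, one_pos, by simp⟩
  obtain ⟨x₀, hx₀, hmin⟩ := hc.exists_isMinOn hS continuous_maxNorm.continuousOn
  exact ⟨maxNorm x₀, maxNorm_pos (ne_of_mem_of_not_mem hx₀ h0), fun x hx => hmin hx⟩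

theorem le_maxNorm_sup_smul_div {κ : Type*} [Fintype κ] {ε : ℝ≥0} (hε : 0 < ε) (c : ι → ℝ≥0)
    {y : ι → κ → ℝ≥0} (hy : ∀ j, ε ≤ maxNorm (y j)) (j : ι) :
    c j ≤ maxNorm (Finset.univ.sup fun j => c j • y j) / ε := by
  rw [le_div_iff₀ hε]
  calc c j * ε ≤ c j * maxNorm (y j) := by gcongr; exact hy j
    _ = maxNorm (c j • y j) := (maxNorm_smul _ _).symm
    _ ≤ _ := maxNorm_mono (Finset.le_sup (f := fun j => c j • y j) (Finset.mem_univ j))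

end MaxNorm

section MaxSpan

variable {n : ℕ} {S : Set (Fin n → ℝ≥0)}

theorem maxSpan_empty : MaxSpan (∅ : Set (Fin n → ℝ≥0)) = {0} := by
  ext u
  constructor
  · rintro ⟨F, lam, hF, rfl⟩
    rw [Finset.coe_eq_empty.mp (Set.subset_empty_iff.mp hF), Finset.sup_empty]
    rfl
  · rintro rfl
    exact ⟨∅, 0, by simp, rfl⟩

theorem finset_sup_smul_mem_maxSpan {ι : Type*} (s : Finset ι) (c : ι → ℝ≥0)
    {y : ι → Fin n → ℝ≥0} (hy : ∀ j ∈ s, y j ∈ S) :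
    s.sup (fun j => c j • y j) ∈ MaxSpan S := by
  classical
  refine ⟨s.image y, fun x => {j ∈ s | y j = x}.sup c, by simpa [Set.subset_def] using hy, ?_⟩
  conv_lhs => rw [← s.image_biUnion_filter_eq y]
  rw [Finset.sup_biUnion]
  refine Finset.sup_congr rfl fun x _ => ?_
  ext i
  simp only [Finset.sup_apply, Pi.smul_apply, smul_eq_mul, NNReal.finset_sup_mul]
  exact congrArg _ (Finset.sup_congr rfl fun j hj => by rw [(Finset.mem_filter.mp hj).2])

theorem exists_eq_univ_sup_smul_of_mem_maxSpan (hS : S.Nonempty) {u : Fin n → ℝ≥0}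
    (hu : u ∈ MaxSpan S) :
    ∃ (c : Fin n → ℝ≥0) (y : Fin n → Fin n → ℝ≥0), (∀ j, y j ∈ S) ∧
      u = Finset.univ.sup fun j => c j • y j := by
  obtain ⟨F, lam, hF, rfl⟩ := hu
  rcases F.eq_empty_or_nonempty with rfl | hFne
  · refine ⟨0, fun _ => hS.some, fun _ => hS.some_mem, ?_⟩
    simp only [Finset.sup_empty, Pi.zero_apply, zero_smul]
    exact (Finset.sup_bot _).symm
  choose x hxF hxmax using fun i : Fin n =>
    F.exists_mem_eq_sup hFne fun v => lam v * v i
  refine ⟨fun i => lam (x i), x, fun i => hF (hxF i), funext fun i => le_antisymm ?_ ?_⟩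
  · simp only [Finset.sup_apply, Pi.smul_apply, smul_eq_mul, hxmax i]
    exact Finset.le_sup (f := fun j => lam (x j) * x j i) (Finset.mem_univ i)
  · simp only [Finset.sup_apply, Finset.sup_le_iff]
    exact fun j _ => Finset.le_sup (f := fun v => (lam v • v) i) (hxF j)

theorem exists_isCompact_maxSpan_inter_subset (hc : IsCompact S) (h0 : 0 ∉ S)
    (hS : S.Nonempty) (R : ℝ≥0) :
    ∃ K, IsCompact K ∧ MaxSpan S ∩ maxNorm ⁻¹' Set.Iic R ⊆ K ∧ K ⊆ MaxSpan S := by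
  obtain ⟨ε, hε, hεS⟩ := hc.exists_pos_le_maxNorm h0
  refine ⟨(fun p : (Fin n → ℝ≥0) × (Fin n → Fin n → ℝ≥0) =>
      Finset.univ.sup fun j => p.1 j • p.2 j) ''
    ((Set.univ.pi fun _ => Set.Iic (R / ε)) ×ˢ Set.univ.pi fun _ => S), ?_, ?_, ?_⟩
  · have hIic : IsCompact (Set.Iic (R / ε)) := by
      rw [← Set.Icc_bot]
      exact isCompact_Icc
    exact ((isCompact_univ_pi fun _ => hIic).prod (isCompact_univ_pi fun _ => hc)).image
      (by fun_prop)
  · rintro u ⟨hu, huR⟩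
    obtain ⟨c, y, hy, rfl⟩ := exists_eq_univ_sup_smul_of_mem_maxSpan hS hu
    refine ⟨(c, y), ⟨fun j _ => ?_, fun j _ => hy j⟩, rfl⟩
    exact (le_maxNorm_sup_smul_div hε c (fun j => hεS _ (hy j)) j).trans (by gcongr; exact huR)
  · rintro _ ⟨⟨c, y⟩, ⟨-, hy⟩, rfl⟩
    exact finset_sup_smul_mem_maxSpan _ c fun j _ => hy j (Set.mem_univ j)

end MaxSpan

/-- if `S ⊆ ℝ≥0ⁿ` is compact and `0 ∉ S`, then `span(S)` is
closed. -/
theorem stmt14 {n : ℕ} (S : Set (Fin n → ℝ≥0)) (hc : IsCompact S)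
    (h0 : (0 : Fin n → ℝ≥0) ∉ S) :
    IsClosed (MaxSpan S) := by
  rcases S.eq_empty_or_nonempty with rfl | hS
  · rw [maxSpan_empty]
    exact isClosed_singleton
  refine isClosed_of_forall_open_inter_subset_closed fun u => ?_
  obtain ⟨K, hK, hSK, hKS⟩ := exists_isCompact_maxSpan_inter_subset hc h0 hS (maxNorm u + 1)
  exact ⟨maxNorm ⁻¹' Set.Iio (maxNorm u + 1), isOpen_Iio.preimage continuous_maxNorm,
    lt_add_one (maxNorm u), K, hK.isClosed,
    fun v hv => hSK ⟨hv.2, Set.preimage_mono Set.Iio_subset_Iic_self hv.1⟩, hKS⟩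
end

section
/- Let u^1, …, u^m ∈ ℝ≥0^n all be nonzero and let v ∈ ℝ≥0^n. For each i let N_i = { j ∈ supp(v) ∩ supp(u^i) : (1/u^i_j) • u^i ≤ (1/v_j) • v componentwise }. Then v ∈ span{u^1, …, u^m} if and only if ⋃_{i=1}^m N_i = supp(v). -/
open scoped NNReal

/-! In a max combination `v = ⨆ λ_x • x` every term lies below `v`, and at each `j ∈ supp v`
some term `λ • u` attains `v j`: a multiple of `u` touching `v` from below at `j`, which is
exactly the condition `u(j) ≤ v(j)`. Conversely, if every `j ∈ supp v` has such a touching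
multiple `v j • u(j)`, then `v` is the maximum of these finitely many vectors. -/

section Rescale

variable {n : ℕ} {x v : Fin n → ℝ≥0} {j : Fin n}

lemma rescale_apply_self (hj : j ∈ supp x) : rescale x j j = 1 :=
  inv_mul_cancel₀ hj.ne'

lemma smul_rescale_self (hj : j ∈ supp v) : v j • rescale v j = v := by
  rw [rescale, smul_smul, mul_inv_cancel₀ hj.ne', one_smul]

lemma smul_rescale_le (hle : rescale x j ≤ rescale v j) (hj : j ∈ supp v) :
    v j • rescale x j ≤ v :=
  (smul_le_smul_of_nonneg_left hle zero_le).trans_eq (smul_rescale_self hj)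

lemma rescale_le_rescale_of_smul_le {c : ℝ≥0} (hle : c • x ≤ v) (hcj : c * x j = v j)
    (hj : j ∈ supp v) : rescale x j ≤ rescale v j := by
  have hc : c ≠ 0 := left_ne_zero_of_mul (hcj.trans_ne hj.ne')
  have hinv : (x j)⁻¹ = (v j)⁻¹ * c := by rw [← hcj, mul_inv, mul_comm c⁻¹, mul_assoc, inv_mul_cancel₀ hc, mul_one]
  calc rescale x j = (v j)⁻¹ • (c • x) := by rw [rescale, hinv, smul_smul]
    _ ≤ rescale v j := smul_le_smul_of_nonneg_left hle zero_le

end Rescale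

namespace MaxCone

variable {n : ℕ} {K : Set (Fin n → ℝ≥0)}

lemma finsetSup_mem (hK : MaxCone K) {ι : Type*} {t : Finset ι} {f : ι → Fin n → ℝ≥0}
    (hf : ∀ i ∈ t, f i ∈ K) : t.sup f ∈ K :=
  Finset.sup_induction hK.1 hK.2.1 hf

lemma mem_of_forall_exists_le_apply_eq (hK : MaxCone K) {v : Fin n → ℝ≥0}
    (h : ∀ j, ∃ y ∈ K, y ≤ v ∧ y j = v j) : v ∈ K := by
  choose y hyK hyv hyj using h
  have hv : v = Finset.univ.sup y := by
    refine le_antisymm (fun j => ?_) (Finset.sup_le fun j _ => hyv j)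
    calc v j = y j j := (hyj j).symm
      _ ≤ Finset.univ.sup y j := Finset.le_sup (f := y) (Finset.mem_univ j) j
  exact hv ▸ hK.finsetSup_mem fun j _ => hyK j

end MaxCone

namespace MaxSpan

variable {n : ℕ} {S : Set (Fin n → ℝ≥0)}

lemma subset_maxSpan : S ⊆ MaxSpan S := fun x hx =>
  ⟨{x}, fun _ => 1, by simpa using hx, by simp⟩

lemma zero_mem : (0 : Fin n → ℝ≥0) ∈ MaxSpan S :=
  ⟨∅, 0, by simp, rfl⟩

lemma smul_mem (c : ℝ≥0) {v : Fin n → ℝ≥0} (hv : v ∈ MaxSpan S) : c • v ∈ MaxSpan S := by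
  obtain ⟨F, lam, hFS, rfl⟩ := hv
  refine ⟨F, fun x => c * lam x, hFS, ?_⟩
  ext j
  simp only [Pi.smul_apply, Finset.sup_apply, smul_eq_mul, NNReal.mul_finset_sup, mul_assoc]

lemma finsetSup_smul_eq_sup_ite_smul [DecidableEq (Fin n → ℝ≥0)]
    {F G : Finset (Fin n → ℝ≥0)} (hFG : F ⊆ G) (lam : (Fin n → ℝ≥0) → ℝ≥0) :
    F.sup (fun x => lam x • x) = G.sup (fun x => (if x ∈ F then lam x else 0) • x) := by
  simp_rw [ite_smul, zero_smul]
  rw [Finset.sup_ite]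
  simp [Finset.filter_mem_eq_inter, Finset.inter_eq_right.2 hFG]

lemma sup_mem {v w : Fin n → ℝ≥0} (hv : v ∈ MaxSpan S) (hw : w ∈ MaxSpan S) :
    v ⊔ w ∈ MaxSpan S := by
  classical
  obtain ⟨F, lam, hFS, rfl⟩ := hv
  obtain ⟨G, mu, hGS, rfl⟩ := hw
  refine ⟨F ∪ G, fun x => (if x ∈ F then lam x else 0) ⊔ (if x ∈ G then mu x else 0),
    by simpa using And.intro hFS hGS, ?_⟩
  rw [finsetSup_smul_eq_sup_ite_smul (G := F ∪ G) Finset.subset_union_left lam,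
    finsetSup_smul_eq_sup_ite_smul (G := F ∪ G) Finset.subset_union_right mu, ← Finset.sup_sup]
  congr 1
  ext x j
  simp only [Pi.sup_apply, Pi.smul_apply, smul_eq_mul, NNReal.sup_mul]

lemma maxCone : MaxCone (MaxSpan S) :=
  ⟨zero_mem, fun _ hv _ hw => sup_mem hv hw, fun c _ hv => smul_mem c hv⟩

lemma exists_rescale_le_of_mem {v : Fin n → ℝ≥0} (hv : v ∈ MaxSpan S) {j : Fin n}
    (hj : j ∈ supp v) : ∃ x ∈ S, j ∈ supp x ∧ rescale x j ≤ rescale v j := by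
  obtain ⟨F, lam, hFS, rfl⟩ := hv
  have hF : F.Nonempty := by
    rw [Finset.nonempty_iff_ne_empty]
    rintro rfl
    simp [supp] at hj
  obtain ⟨x, hxF, hx⟩ := Finset.exists_mem_eq_sup F hF (fun x => lam x * x j)
  have hvj : F.sup (fun x => lam x • x) j = lam x * x j := by
    rw [Finset.sup_apply]
    exact hx
  refine ⟨x, hFS hxF, ?_, rescale_le_rescale_of_smul_le
    (Finset.le_sup (f := fun x => lam x • x) hxF) hvj.symm hj⟩
  have hpos : 0 < lam x * x j := hvj ▸ hj
  exact pos_of_ne_zero (right_ne_zero_of_mul hpos.ne')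

theorem mem_iff_forall_exists_rescale_le {v : Fin n → ℝ≥0} :
    v ∈ MaxSpan S ↔ ∀ j ∈ supp v, ∃ x ∈ S, j ∈ supp x ∧ rescale x j ≤ rescale v j := by
  refine ⟨fun hv j hj => exists_rescale_le_of_mem hv hj,
    fun h => maxCone.mem_of_forall_exists_le_apply_eq fun j => ?_⟩
  by_cases hj : j ∈ supp v
  · obtain ⟨x, hxS, hxj, hle⟩ := h j hj
    refine ⟨v j • rescale x j, smul_mem _ (smul_mem _ (subset_maxSpan hxS)), smul_rescale_le hle hj, ?_⟩
    rw [Pi.smul_apply, rescale_apply_self hxj, smul_eq_mul, mul_one]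
  · exact ⟨0, zero_mem, zero_le, (nonpos_iff_eq_zero.1 (not_lt.1 hj)).symm⟩

end MaxSpan

theorem stmt18_general {n m : ℕ} (u : Fin m → (Fin n → ℝ≥0))
    (v : Fin n → ℝ≥0) :
    v ∈ MaxSpan (Set.range u) ↔
      (⋃ i : Fin m,
        {j | j ∈ supp v ∧ j ∈ supp (u i) ∧ rescale (u i) j ≤ rescale v j})
        = supp v := by
  rw [MaxSpan.mem_iff_forall_exists_rescale_le, Set.Subset.antisymm_iff,
    and_iff_right (Set.iUnion_subset fun i j hj => hj.1)]
  simp only [Set.exists_range_iff, Set.subset_def, Set.mem_iUnion, Set.mem_ofPred_eq]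
  exact forall₂_congr fun j hj => by simp only [hj, true_and]

/-- for nonzero `u¹, …, uᵐ` and `v`, with
`Nᵢ = {j ∈ supp v ∩ supp uⁱ : uⁱ(j) ≤ v(j)}`, we have
`v ∈ span{u¹, …, uᵐ}` iff `⋃ i, Nᵢ = supp v`. -/
theorem stmt18 {n m : ℕ} (u : Fin m → (Fin n → ℝ≥0)) (hu : ∀ i, u i ≠ 0)
    (v : Fin n → ℝ≥0) :
    v ∈ MaxSpan (Set.range u) ↔
      (⋃ i : Fin m,
        {j | j ∈ supp v ∧ j ∈ supp (u i) ∧ rescale (u i) j ≤ rescale v j})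
        = supp v :=
  stmt18_general u v
end
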